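/- arXiv:2010.09001 — 2 statements merged into one kernel-verified Lean document; each statement's English description precedes it below -/
import Mathlib

section
/- Greedy approximation bound for monotone submodular maximization: if f is a monotone submodular set function on finite subsets of a ground set with f(∅) = 0, S* is any set of size k, and x_1,…,x_n is a greedy sequence (each x_{l+1} maximizes the marginal gain f(S_l ∪ {x}) − f(S_l) over the ground set, where S_l = {x_1,…,x_l}), then f(S_n) ≥ (1 − e^{-n/k}) f(S*). -/
/-!
Submodularity bounds the gain of adding all of `S*` to `S_l` by the sum of the single-element
gains, each of which is at most the greedy gain; hence the gap `f S* - f S_l` shrinks by a factor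
`1 - 1/k` at every greedy step, and `(1 - 1/k)^n ≤ e^{-n/k}`.
-/

open Finset

lemma one_sub_pow_le_exp_neg_mul {t : ℝ} (ht : t ≤ 1) (n : ℕ) :
    (1 - t) ^ n ≤ Real.exp (-(n * t)) :=
  calc (1 - t) ^ n ≤ Real.exp (-t) ^ n :=
        pow_le_pow_left₀ (sub_nonneg.2 ht) (Real.one_sub_le_exp_neg t) n
    _ = Real.exp (-(n * t)) := by rw [← Real.exp_nat_mul, mul_neg]

section Submodular

variable {V : Type*} [DecidableEq V]

def IsSubmodular (f : Finset V → ℝ) : Prop :=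
  ∀ A B : Finset V, A ⊆ B → ∀ v ∉ B, f (insert v A) - f A ≥ f (insert v B) - f B

variable {f : Finset V → ℝ}

lemma IsSubmodular.union_sub_le_sum_insert_sub (hf : IsSubmodular f) (A T : Finset V) :
    f (A ∪ T) - f A ≤ ∑ y ∈ T, (f (insert y A) - f A) := by
  induction T using Finset.induction_on with
  | empty => simp
  | @insert v T hvT ih =>
    have hgain : f (insert v (A ∪ T)) - f (A ∪ T) ≤ f (insert v A) - f A := by
      by_cases hv : v ∈ A ∪ T
      · have hvA : v ∈ A := (mem_union.1 hv).resolve_right hvT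
        simp [insert_eq_of_mem hv, insert_eq_of_mem hvA]
      · exact hf A (A ∪ T) subset_union_left v hv
    rw [sum_insert hvT, union_insert]
    linarith

lemma IsSubmodular.sub_le_card_mul (hmono : Monotone f) (hf : IsSubmodular f)
    {A : Finset V} {g : ℝ} (hg : ∀ y, f (insert y A) - f A ≤ g) (T : Finset V) :
    f T - f A ≤ #T * g :=
  calc f T - f A ≤ f (A ∪ T) - f A := by linarith [hmono (subset_union_right : T ⊆ A ∪ T)]
    _ ≤ ∑ y ∈ T, (f (insert y A) - f A) := hf.union_sub_le_sum_insert_sub A T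
    _ ≤ #T * g := by simpa using sum_le_card_nsmul T _ g fun y _ => hg y

lemma IsSubmodular.greedy_gap_le (hmono : Monotone f) (hf : IsSubmodular f)
    {S : ℕ → Finset V} {n : ℕ}
    (hgreedy : ∀ l < n, ∀ y, f (insert y (S l)) - f (S l) ≤ f (S (l + 1)) - f (S l))
    {T : Finset V} (hT : 0 < #T) :
    f T - f (S n) ≤ (1 - (#T : ℝ)⁻¹) ^ n * (f T - f (S 0)) := by
  have hk : (1 : ℝ) ≤ #T := by exact_mod_cast hT
  refine le_geom (u := fun l => f T - f (S l)) (sub_nonneg.2 (inv_le_one_of_one_le₀ hk)) n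
    fun l hl => ?_
  have hdrop : (f T - f (S l)) / #T ≤ f (S (l + 1)) - f (S l) :=
    (div_le_iff₀' (by positivity)).2 (hf.sub_le_card_mul hmono (hgreedy l hl) T)
  calc f T - f (S (l + 1)) ≤ f T - f (S l) - (f T - f (S l)) / #T := by linarith
    _ = (1 - (#T : ℝ)⁻¹) * (f T - f (S l)) := by ring

end Submodular

theorem greedy_submodular_bound_general {V : Type*} [DecidableEq V]
    (f : Finset V → ℝ)
    (hmono : ∀ A B : Finset V, A ⊆ B → f A ≤ f B)
    (hsub : ∀ A B : Finset V, A ⊆ B → ∀ v ∉ B,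
      f (insert v A) - f A ≥ f (insert v B) - f B)
    (hempty : f ∅ = 0)
    (n k : ℕ) (hk : 0 < k)
    (Sstar : Finset V) (hcard : Sstar.card = k)
    (S : ℕ → Finset V)
    (hgreedy : ∀ l < n, ∀ y : V,
      f (S (l + 1)) - f (S l) ≥ f (insert y (S l)) - f (S l)) :
    f (S n) ≥ (1 - Real.exp (-(n : ℝ) / (k : ℝ))) * f Sstar := by
  have hmono' : Monotone f := fun A B h => hmono A B h
  have hnonneg (A : Finset V) : 0 ≤ f A := hempty ▸ hmono' (empty_subset A)
  have hk1 : (1 : ℝ) ≤ k := by exact_mod_cast hk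
  have hc : 0 ≤ 1 - (k : ℝ)⁻¹ := sub_nonneg.2 (inv_le_one_of_one_le₀ hk1)
  have hgap := hcard ▸ IsSubmodular.greedy_gap_le hmono' hsub hgreedy (hcard ▸ hk)
  have hdecay : (1 - (k : ℝ)⁻¹) ^ n ≤ Real.exp (-(n : ℝ) / k) := by
    simpa [div_eq_mul_inv] using one_sub_pow_le_exp_neg_mul (inv_le_one_of_one_le₀ hk1) n
  have hloss : f Sstar - f (S n) ≤ Real.exp (-(n : ℝ) / k) * f Sstar :=
    calc f Sstar - f (S n) ≤ (1 - (k : ℝ)⁻¹) ^ n * (f Sstar - f (S 0)) := hgap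
      _ ≤ (1 - (k : ℝ)⁻¹) ^ n * f Sstar := by
        gcongr
        linarith [hnonneg (S 0)]
      _ ≤ Real.exp (-(n : ℝ) / k) * f Sstar := by gcongr; exact hnonneg Sstar
  linarith

/-- Greedy approximation bound for monotone submodular maximization:
`f(S_n) ≥ (1 - e^{-n/k}) f(S*)`. -/
theorem greedy_submodular_bound {V : Type*} [Fintype V] [DecidableEq V]
    (f : Finset V → ℝ)
    (hmono : ∀ A B : Finset V, A ⊆ B → f A ≤ f B)
    (hsub : ∀ A B : Finset V, A ⊆ B → ∀ v ∉ B,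
      f (insert v A) - f A ≥ f (insert v B) - f B)
    (hempty : f ∅ = 0)
    (n k : ℕ) (hk : 0 < k)
    (Sstar : Finset V) (hcard : Sstar.card = k)
    (x : ℕ → V) (S : ℕ → Finset V)
    (hS : ∀ l, S l = (Finset.range l).image x)
    (hgreedy : ∀ l < n, ∀ y : V,
      f (S (l + 1)) - f (S l) ≥ f (insert y (S l)) - f (S l)) :
    f (S n) ≥ (1 - Real.exp (-(n : ℝ) / (k : ℝ))) * f Sstar :=
  greedy_submodular_bound_general f hmono hsub hempty n k hk Sstar hcard S hgreedy
end

section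
/- Constrained greedy exploration bound: let f be monotone and submodular with f(∅)=0, and suppose a sequence x_1,…,x_n satisfies: for every l with 1 ≤ l < n, f(S_{l+1}) − f(S_l) ≥ ρ · max_{x ∈ V} [f(S_l ∪ {x}) − f(S_l)] for some ρ ∈ (0,1]. If S* is any set of size k containing x_1 (k > 1, n > 1), then f(S_n) ≥ f(S*) − e^{-(n−1)ρ/(k−1)} (f(S*) − f({x_1})). -/
lemma submod_tele {V : Type*} [DecidableEq V] (f : Finset V → ℝ)
    (hmono : ∀ A B : Finset V, A ⊆ B → f A ≤ f B)
    (hsub : ∀ A B : Finset V, A ⊆ B → ∀ v ∉ B,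
      f (insert v A) - f A ≥ f (insert v B) - f B)
    (T B : Finset V) :
    f (B ∪ T) - f B ≤ ∑ y ∈ T, (f (insert y B) - f B) := by
  induction T using Finset.induction_on with
  | empty => simp
  | @insert a T' ha ih =>
    rw [Finset.sum_insert ha]
    have hU : B ∪ insert a T' = insert a (B ∪ T') := by
      ext z; simp [or_comm, or_left_comm]
    by_cases h : a ∈ B ∪ T'
    · have : insert a (B ∪ T') = B ∪ T' := Finset.insert_eq_self.mpr h
      rw [hU, this]
      have h1 : (0:ℝ) ≤ f (insert a B) - f B := by
        have := hmono B (insert a B) (Finset.subset_insert _ _); linarith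
      linarith
    · have h2 := hsub B (B ∪ T') Finset.subset_union_left a h
      rw [hU]
      linarith

/-- Constrained (ρ-approximate) greedy exploration bound:
`f(S_n) ≥ f(S*) − e^{-(n−1)ρ/(k−1)} (f(S*) − f({x_1}))`. -/
theorem constrained_greedy_bound {V : Type*} [Fintype V] [DecidableEq V]
    (f : Finset V → ℝ)
    (hmono : ∀ A B : Finset V, A ⊆ B → f A ≤ f B)
    (hsub : ∀ A B : Finset V, A ⊆ B → ∀ v ∉ B,
      f (insert v A) - f A ≥ f (insert v B) - f B)
    (hempty : f ∅ = 0)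
    (n k : ℕ) (hn : 1 < n) (hk : 1 < k)
    (ρ : ℝ) (hρ : 0 < ρ) (hρ1 : ρ ≤ 1)
    (x : ℕ → V) (S : ℕ → Finset V)
    (hS : ∀ l, S l = (Finset.range l).image x)
    (Sstar : Finset V) (hcard : Sstar.card = k) (hx1 : x 0 ∈ Sstar)
    (hgreedy : ∀ l, 1 ≤ l → l < n → ∀ y : V,
      f (S (l + 1)) - f (S l) ≥ ρ * (f (insert y (S l)) - f (S l))) :
    f (S n) ≥ f Sstar -
      Real.exp (-((n : ℝ) - 1) * ρ / ((k : ℝ) - 1)) * (f Sstar - f {x 0}) := by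
  have hk1 : (0:ℝ) < (k:ℝ) - 1 := by
    have : (1:ℝ) < (k:ℝ) := by exact_mod_cast hk
    linarith
  set c : ℝ := ρ / ((k:ℝ) - 1) with hc
  have hc0 : 0 < c := div_pos hρ hk1
  have hc1 : c ≤ 1 := by
    rw [hc, div_le_one hk1]
    have : (2:ℝ) ≤ (k:ℝ) := by exact_mod_cast hk
    linarith
  have hS1 : S 1 = {x 0} := by
    rw [hS]; simp
  -- one-step contraction
  have key : ∀ l, 1 ≤ l → l < n →
      f Sstar - f (S (l+1)) ≤ (1 - c) * (f Sstar - f (S l)) := by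
    intro l hl1 hln
    have hx0 : x 0 ∈ S l := by
      rw [hS]; exact Finset.mem_image.mpr ⟨0, Finset.mem_range.mpr hl1, rfl⟩
    have hgain0 : f (insert (x 0) (S l)) - f (S l) = 0 := by
      rw [Finset.insert_eq_self.mpr hx0]; ring
    have htele := submod_tele f hmono hsub Sstar (S l)
    have hmon1 : f Sstar ≤ f (S l ∪ Sstar) := hmono _ _ Finset.subset_union_right
    -- sum over Sstar = sum over erase (x 0)
    have hsum : ∑ y ∈ Sstar, (f (insert y (S l)) - f (S l))
        = ∑ y ∈ Sstar.erase (x 0), (f (insert y (S l)) - f (S l)) := by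
      rw [← Finset.add_sum_erase _ _ hx1, hgain0, zero_add]
    set Δ : ℝ := f (S (l+1)) - f (S l) with hΔ
    have hbound : ∀ y ∈ Sstar.erase (x 0),
        f (insert y (S l)) - f (S l) ≤ Δ / ρ := by
      intro y _
      have := hgreedy l hl1 hln y
      rw [le_div_iff₀ hρ]; linarith [mul_comm ρ (f (insert y (S l)) - f (S l))]
    have hsum2 : ∑ y ∈ Sstar.erase (x 0), (f (insert y (S l)) - f (S l))
        ≤ ((k:ℝ) - 1) * (Δ / ρ) := by
      have hcard' : (Sstar.erase (x 0)).card = k - 1 := by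
        rw [Finset.card_erase_of_mem hx1, hcard]
      calc ∑ y ∈ Sstar.erase (x 0), (f (insert y (S l)) - f (S l))
          ≤ ∑ _y ∈ Sstar.erase (x 0), (Δ / ρ) := Finset.sum_le_sum hbound
        _ = ((Sstar.erase (x 0)).card : ℝ) * (Δ / ρ) := by
            rw [Finset.sum_const, nsmul_eq_mul]
        _ = ((k:ℝ) - 1) * (Δ / ρ) := by
            rw [hcard']
            congr 1
            have : (1:ℕ) ≤ k := le_of_lt hk
            push_cast [Nat.cast_sub this]
            ring
    have hchain : f Sstar - f (S l) ≤ ((k:ℝ) - 1) * (Δ / ρ) := by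
      calc f Sstar - f (S l) ≤ f (S l ∪ Sstar) - f (S l) := by linarith
        _ ≤ _ := htele
        _ ≤ _ := by rw [hsum] at *; linarith [hsum2]
    -- so Δ ≥ c * (f Sstar - f (S l))
    have hΔge : c * (f Sstar - f (S l)) ≤ Δ := by
      rw [hc]
      rw [div_mul_eq_mul_div, div_le_iff₀ hk1]
      have := mul_le_mul_of_nonneg_left hchain (le_of_lt hρ)
      rw [mul_comm]
      calc (f Sstar - f (S l)) * ρ = ρ * (f Sstar - f (S l)) := by ring
        _ ≤ ρ * (((k:ℝ) - 1) * (Δ / ρ)) := this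
        _ = Δ * ((k:ℝ) - 1) := by field_simp
    nlinarith [hΔge]
  -- induction
  have hmain : ∀ m, 1 + m ≤ n →
      f Sstar - f (S (1 + m)) ≤ (1 - c)^m * (f Sstar - f (S 1)) := by
    intro m
    induction m with
    | zero => intro _; simp
    | succ m ih =>
      intro hmn
      have h1 : 1 + m < n := by omega
      have h2 := key (1 + m) (by omega) h1
      have h3 := ih (le_of_lt h1)
      have hnn : (0:ℝ) ≤ 1 - c := by linarith
      calc f Sstar - f (S (1 + (m+1))) = f Sstar - f (S ((1+m)+1)) := by ring_nf
        _ ≤ (1 - c) * (f Sstar - f (S (1+m))) := h2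
        _ ≤ (1 - c) * ((1 - c)^m * (f Sstar - f (S 1))) :=
            mul_le_mul_of_nonneg_left h3 hnn
        _ = (1 - c)^(m+1) * (f Sstar - f (S 1)) := by ring
  have hfin := hmain (n - 1) (by omega)
  have hn1 : 1 + (n - 1) = n := by omega
  rw [hn1, hS1] at hfin
  -- bound (1-c)^(n-1) by exp
  have hg1 : (0:ℝ) ≤ f Sstar - f {x 0} := by
    have : ({x 0} : Finset V) ⊆ Sstar := Finset.singleton_subset_iff.mpr hx1
    linarith [hmono _ _ this]
  have hexp1 : 1 - c ≤ Real.exp (-c) := by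
    have := Real.add_one_le_exp (-c); linarith
  have hnn : (0:ℝ) ≤ 1 - c := by linarith
  have hpow : (1 - c)^(n-1) ≤ (Real.exp (-c))^(n-1) := pow_le_pow_left₀ hnn hexp1 _
  have hexp2 : (Real.exp (-c))^(n-1) = Real.exp (-((n:ℝ) - 1) * ρ / ((k:ℝ) - 1)) := by
    rw [← Real.exp_nat_mul]
    congr 1
    have hcast : ((n - 1 : ℕ) : ℝ) = (n:ℝ) - 1 := by
      have : (1:ℕ) ≤ n := le_of_lt hn
      push_cast [Nat.cast_sub this]; ring
    rw [hcast, hc]; field_simp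
  have hfinal : f Sstar - f (S n) ≤
      Real.exp (-((n:ℝ) - 1) * ρ / ((k:ℝ) - 1)) * (f Sstar - f {x 0}) := by
    calc f Sstar - f (S n) ≤ (1 - c)^(n-1) * (f Sstar - f {x 0}) := hfin
      _ ≤ (Real.exp (-c))^(n-1) * (f Sstar - f {x 0}) :=
          mul_le_mul_of_nonneg_right hpow hg1
      _ = _ := by rw [hexp2]
  linarith
end
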